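/- arXiv:2604.24522 — 8 statements merged into one kernel-verified Lean document; each statement's English description precedes it below -/
import Mathlib

section
/- Let X be a subset of a topological space, and suppose there exists a nonempty subset Z such that X is dense in Z (i.e. Z ⊆ closure(X ∩ Z)) and codense in Z (i.e. Z ⊆ closure(Z \ X)). Then X is not constructible; more precisely, for every n the n-fold iterated frontier ∂⁽ⁿ⁾X = ∂(∂(⋯∂X)) is nonempty, where ∂X = closure(X) \ X. -/
open Set Topology

/-- Iterated frontier: `itFront 0 X = X`, `itFront (n+1) X = closure (itFront n X) \ itFront n X`. -/
def itFront {T : Type*} [TopologicalSpace T] : ℕ → Set T → Set T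
  | 0, X => X
  | n + 1, X => closure (itFront n X) \ itFront n X

lemma frontier_step {T : Type*} [TopologicalSpace T] (X Z : Set T)
    (hdense : Z ⊆ closure (X ∩ Z))
    (hcodense : Z ⊆ closure (Z \ X)) :
    Z ⊆ closure ((closure X \ X) ∩ Z) ∧ Z ⊆ closure (Z \ (closure X \ X)) := by
  constructor
  · refine hcodense.trans (closure_mono ?_)
    rintro z ⟨hzZ, hzX⟩
    exact ⟨⟨closure_mono inter_subset_left (hdense hzZ), hzX⟩, hzZ⟩
  · refine hdense.trans (closure_mono ?_)
    rintro z ⟨hzX, hzZ⟩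
    exact ⟨hzZ, fun h => h.2 hzX⟩

theorem stmt0 {T : Type*} [TopologicalSpace T] (X Z : Set T)
    (hZne : Z.Nonempty)
    (hdense : Z ⊆ closure (X ∩ Z))
    (hcodense : Z ⊆ closure (Z \ X)) :
    ∀ n : ℕ, (itFront n X).Nonempty := by
  have key : ∀ n, Z ⊆ closure (itFront n X ∩ Z) ∧ Z ⊆ closure (Z \ itFront n X) := by
    intro n
    induction n with
    | zero => exact ⟨hdense, hcodense⟩
    | succ n ih => exact frontier_step _ _ ih.1 ih.2
  intro n
  obtain ⟨z, hz⟩ := hZne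
  have := (key n).1 hz
  rcases (closure_nonempty_iff.mp ⟨z, this⟩) with ⟨w, hw, _⟩
  exact ⟨w, hw⟩
end

section
/- Let T be a nonempty topological space. If Y and Z are dense subsets of T and Y ∩ Z is not dense in T, then neither Y nor Z is constructible; in fact both Y and Z have nonempty n-fold iterated frontier for every n. Consequently, in a topological space in which every subset under consideration is constructible (has vanishing iterated frontier), the dense constructible subsets are closed under finite intersection and form a filter in the Boolean algebra of constructible sets. -/
open Set Topology

private lemma key_step {T : Type*} [TopologicalSpace T] {A W S : Set T}
    (h : A ∩ W = S) (hc : W ⊆ closure S) :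
    (closure A \ A) ∩ W = W \ S := by
  ext x
  constructor
  · rintro ⟨⟨-, hxA⟩, hxW⟩
    exact ⟨hxW, fun hxS => hxA (h ▸ hxS).1⟩
  · rintro ⟨hxW, hxS⟩
    refine ⟨⟨closure_mono (h ▸ inter_subset_left) (hc hxW), fun hxA => hxS ?_⟩, hxW⟩
    rw [← h]; exact ⟨hxA, hxW⟩

private lemma alternation {T : Type*} [TopologicalSpace T] {Y W : Set T}
    (h1 : W ⊆ closure (Y ∩ W)) (h2 : W ⊆ closure (W \ Y)) :
    ∀ n : ℕ, itFront n Y ∩ W = Y ∩ W ∨ itFront n Y ∩ W = W \ Y := by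
  intro n
  induction n with
  | zero => left; rfl
  | succ n ih =>
    rcases ih with h | h
    · right
      have := key_step (A := itFront n Y) (S := Y ∩ W) (W := W) h (by simpa using h1)
      simpa [itFront, diff_inter_self_eq_diff] using this
    · left
      have := key_step (A := itFront n Y) (S := W \ Y) (W := W) h h2
      have h3 : W \ (W \ Y) = Y ∩ W := by
        rw [diff_diff_right_self, inter_comm]
      rw [h3] at this
      simpa [itFront] using this

private lemma main_lemma {T : Type*} [TopologicalSpace T] {Y Z : Set T}
    (hY : Dense Y) (hZ : Dense Z) (hne : ¬ Dense (Y ∩ Z)) :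
    ∀ n : ℕ, (itFront n Y).Nonempty := by
  obtain ⟨x, hx⟩ : ∃ x, x ∉ closure (Y ∩ Z) := by
    by_contra h
    push_neg at h
    exact hne fun t => h t
  rw [mem_closure_iff] at hx
  push_neg at hx
  obtain ⟨W, hWopen, hxW, hWempty⟩ := hx
  have hWne : W.Nonempty := ⟨x, hxW⟩
  -- Y ∩ W dense in W
  have h1 : W ⊆ closure (Y ∩ W) := by
    have := hY.open_subset_closure_inter hWopen
    simpa [inter_comm] using this
  -- Z ∩ W ⊆ W \ Y
  have hZW : Z ∩ W ⊆ W \ Y := by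
    rintro z ⟨hzZ, hzW⟩
    refine ⟨hzW, fun hzY => ?_⟩
    have : z ∈ W ∩ (Y ∩ Z) := ⟨hzW, hzY, hzZ⟩
    simp [hWempty] at this
  have h2 : W ⊆ closure (W \ Y) := by
    intro w hw
    have := hZ.open_subset_closure_inter hWopen hw
    exact closure_mono (by rw [inter_comm]; exact hZW) this
  intro n
  rcases alternation h1 h2 n with h | h
  · have : (Y ∩ W).Nonempty := by
      have := hY.inter_open_nonempty W hWopen hWne
      rwa [inter_comm] at this
    obtain ⟨w, hw⟩ := this
    exact ⟨w, (show w ∈ itFront n Y ∩ W from h ▸ hw).1⟩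
  · have hne' : (W \ Y).Nonempty := by
      have := hZ.inter_open_nonempty W hWopen hWne
      rw [inter_comm] at this
      exact this.mono hZW
    obtain ⟨w, hw⟩ := hne'
    exact ⟨w, (show w ∈ itFront n Y ∩ W from h ▸ hw).1⟩

theorem stmt2 {T : Type*} [TopologicalSpace T] [Nonempty T] :
    (∀ Y Z : Set T, Dense Y → Dense Z → ¬ Dense (Y ∩ Z) →
      ∀ n : ℕ, (itFront n Y).Nonempty ∧ (itFront n Z).Nonempty) ∧
    (∀ Y Z : Set T, Dense Y → Dense Z →
      (∃ n : ℕ, itFront n Y = ∅) → (∃ n : ℕ, itFront n Z = ∅) → Dense (Y ∩ Z)) := by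
  constructor
  · intro Y Z hY hZ hne n
    refine ⟨main_lemma hY hZ hne n, main_lemma hZ hY (by rwa [inter_comm]) n⟩
  · intro Y Z hY hZ ⟨n, hn⟩ _
    by_contra hne
    have := main_lemma hY hZ hne n
    rw [hn] at this
    exact this.ne_empty rfl
end

section
/- Let X be a subset of a topological space. If closure(∂X) has nonempty interior Z relative to closure(X) (i.e. there is an open set W with W ∩ closure(X) = Z ⊆ closure(∂X) and Z ≠ ∅), then X is dense and codense in Z, i.e. Z ⊆ closure(X ∩ Z) and Z ⊆ closure(Z \ X). -/
open Set Topology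

theorem stmt3 {T : Type*} [TopologicalSpace T] (X W Z : Set T)
    (hW : IsOpen W) (hZ : W ∩ closure X = Z)
    (hsub : Z ⊆ closure (closure X \ X)) (hne : Z.Nonempty) :
    Z ⊆ closure (X ∩ Z) ∧ Z ⊆ closure (Z \ X) := by
  subst hZ
  constructor
  · intro z hz
    rw [mem_closure_iff]
    intro U hU hzU
    have h1 : z ∈ closure X := hz.2
    rw [mem_closure_iff] at h1
    obtain ⟨x, hxUW, hxX⟩ := h1 (U ∩ W) (hU.inter hW) ⟨hzU, hz.1⟩
    exact ⟨x, hxUW.1, hxX, hxUW.2, subset_closure hxX⟩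
  · intro z hz
    rw [mem_closure_iff]
    intro U hU hzU
    have h1 := hsub hz
    rw [mem_closure_iff] at h1
    obtain ⟨y, hyUW, hyC, hyX⟩ := h1 (U ∩ W) (hU.inter hW) ⟨hzU, hz.1⟩
    exact ⟨y, hyUW.1, ⟨hyUW.2, hyC⟩, hyX⟩
end

section
/- Let (R, <) be a conditionally complete dense linear order without endpoints, with the order topology. Let X ⊆ R be a nonempty closed set with empty interior and no isolated points. Let C₀ = {y ∈ X : ∃ y' < y, (y', y) ∩ X = ∅} and C₁ = {z ∈ X : ∃ z' > z, (z, z') ∩ X = ∅}. Then C₀ and C₁ are disjoint, and both are dense in X. In particular, C₀ is dense and codense in X. -/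
open Set Topology

theorem stmt4 {R : Type*} [ConditionallyCompleteLinearOrder R] [DenselyOrdered R]
    [NoMinOrder R] [NoMaxOrder R] [TopologicalSpace R] [OrderTopology R]
    (X : Set R) (hXne : X.Nonempty) (hXcl : IsClosed X) (hXint : interior X = ∅)
    (hXperf : ∀ x ∈ X, x ∈ closure (X \ {x})) :
    Disjoint {y ∈ X | ∃ y' < y, Ioo y' y ∩ X = ∅} {z ∈ X | ∃ z' > z, Ioo z z' ∩ X = ∅} ∧
    X ⊆ closure {y ∈ X | ∃ y' < y, Ioo y' y ∩ X = ∅} ∧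
    X ⊆ closure {z ∈ X | ∃ z' > z, Ioo z z' ∩ X = ∅} ∧
    X ⊆ closure (X \ {y ∈ X | ∃ y' < y, Ioo y' y ∩ X = ∅}) := by
  set C0 := {y ∈ X | ∃ y' < y, Ioo y' y ∩ X = ∅} with hC0
  set C1 := {z ∈ X | ∃ z' > z, Ioo z z' ∩ X = ∅} with hC1
  have hgap : ∀ a b : R, a < b → ∃ c, a < c ∧ c < b ∧ c ∉ X := by
    intro a b hab
    by_contra h
    push_neg at h
    have hsub : Ioo a b ⊆ interior X :=
      interior_maximal (fun c hc => h c hc.1 hc.2) isOpen_Ioo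
    obtain ⟨c, hc⟩ := exists_between hab
    exact absurd (hXint ▸ hsub hc) (notMem_empty c)
  have hdisj : Disjoint C0 C1 := by
    rw [Set.disjoint_left]
    rintro y ⟨hyX, y', hy', hy'e⟩ ⟨-, z', hz', hz'e⟩
    have hcl := hXperf y hyX
    rw [mem_closure_iff] at hcl
    obtain ⟨t, ⟨hty, htX⟩⟩ := hcl (Ioo y' z') isOpen_Ioo ⟨hy', hz'⟩
    rcases lt_or_gt_of_ne (htX.2 : t ≠ y) with h | h
    · have ht : t ∈ Ioo y' y ∩ X := ⟨⟨hty.1, h⟩, htX.1⟩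
      rw [hy'e] at ht; exact ht
    · have ht : t ∈ Ioo y z' ∩ X := ⟨⟨h, hty.2⟩, htX.1⟩
      rw [hz'e] at ht; exact ht
  have hd0 : X ⊆ closure C0 := by
    intro x hx
    rw [mem_closure_iff_nhds]
    intro o ho
    obtain ⟨a, b, ⟨hax, hxb⟩, hab⟩ := mem_nhds_iff_exists_Ioo_subset.mp ho
    obtain ⟨c, hac, hcx, hcX⟩ := hgap a x hax
    set S := X ∩ Icc c x with hS
    have hSne : S.Nonempty := ⟨x, hx, le_of_lt hcx, le_refl x⟩
    have hSbdd : BddBelow S := ⟨c, fun t ht => ht.2.1⟩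
    have hScl : IsClosed S := hXcl.inter isClosed_Icc
    have hyS : sInf S ∈ S := hScl.csInf_mem hSne hSbdd
    set y := sInf S
    have hcy : c < y := lt_of_le_of_ne hyS.2.1 (fun h => hcX (h ▸ hyS.1))
    refine ⟨y, hab ⟨lt_trans hac hcy, lt_of_le_of_lt hyS.2.2 hxb⟩, hyS.1, c, hcy, ?_⟩
    ext t
    simp only [mem_inter_iff, mem_Ioo, mem_empty_iff_false, iff_false]
    rintro ⟨⟨hct, hty⟩, htX⟩
    exact absurd (csInf_le hSbdd ⟨htX, le_of_lt hct, le_of_lt (lt_of_lt_of_le hty hyS.2.2)⟩)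
      (not_le_of_gt hty)
  have hd1 : X ⊆ closure C1 := by
    intro x hx
    rw [mem_closure_iff_nhds]
    intro o ho
    obtain ⟨a, b, ⟨hax, hxb⟩, hab⟩ := mem_nhds_iff_exists_Ioo_subset.mp ho
    obtain ⟨c, hxc, hcb, hcX⟩ := hgap x b hxb
    set S := X ∩ Icc x c with hS
    have hSne : S.Nonempty := ⟨x, hx, le_refl x, le_of_lt hxc⟩
    have hSbdd : BddAbove S := ⟨c, fun t ht => ht.2.2⟩
    have hScl : IsClosed S := hXcl.inter isClosed_Icc
    have hzS : sSup S ∈ S := hScl.csSup_mem hSne hSbdd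
    set z := sSup S
    have hzc : z < c := lt_of_le_of_ne hzS.2.2 (fun h => hcX (h ▸ hzS.1))
    refine ⟨z, hab ⟨lt_of_lt_of_le hax hzS.2.1, lt_trans hzc hcb⟩, hzS.1, c, hzc, ?_⟩
    ext t
    simp only [mem_inter_iff, mem_Ioo, mem_empty_iff_false, iff_false]
    rintro ⟨⟨hzt, htc⟩, htX⟩
    exact absurd (le_csSup hSbdd ⟨htX, le_of_lt (lt_of_le_of_lt hzS.2.1 hzt), le_of_lt htc⟩)
      (not_le_of_gt hzt)
  refine ⟨hdisj, hd0, hd1, fun x hx => ?_⟩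
  have hsub : C1 ⊆ X \ C0 := fun z hz =>
    ⟨hz.1, fun h => Set.disjoint_left.mp hdisj h hz⟩
  exact closure_mono hsub (hd1 hx)
end

section
/- Let (R, <) be a linear order. A set X ⊆ R is a union of at most n discrete sets (in the order topology) if and only if the n-th Cantor–Bendixson derivative X⁽ⁿ⁾ is empty, where X⁽⁰⁾ = X and X⁽ᵏ⁺¹⁾ is the set of non-isolated points of X⁽ᵏ⁾ (in the subspace topology on X⁽ᵏ⁾). Moreover, when X⁽ⁿ⁾ = ∅, the sets X⁽ⁱ⁾ \ X⁽ⁱ⁺¹⁾ for i < n are discrete and partition X. -/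
open Set Topology

/-- Cantor–Bendixson derivative: the non-isolated points of `S` (subspace topology). -/
def cbDeriv {R : Type*} [TopologicalSpace R] (S : Set R) : Set R :=
  {x ∈ S | x ∈ closure (S \ {x})}

/-- Iterated Cantor–Bendixson derivative. -/
def cbIter {R : Type*} [TopologicalSpace R] (X : Set R) : ℕ → Set R
  | 0 => X
  | n + 1 => cbDeriv (cbIter X n)

section Aux

variable {R : Type*} [TopologicalSpace R]

lemma cbDeriv_subset (S : Set R) : cbDeriv S ⊆ S := fun _ hx => hx.1

lemma cbDeriv_mono {S T : Set R} (h : S ⊆ T) : cbDeriv S ⊆ cbDeriv T := by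
  rintro x ⟨hxS, hxc⟩
  exact ⟨h hxS, closure_mono (diff_subset_diff_left h) hxc⟩

lemma cbIter_anti (X : Set R) : Antitone (cbIter X) :=
  antitone_nat_of_succ_le fun _ => cbDeriv_subset _

lemma cbIter_mono {X Y : Set R} (h : X ⊆ Y) : ∀ k, cbIter X k ⊆ cbIter Y k
  | 0 => h
  | k + 1 => cbDeriv_mono (cbIter_mono h k)

lemma cbDeriv_inter_open {U S : Set R} (hU : IsOpen U) :
    cbDeriv S ∩ U ⊆ cbDeriv (S ∩ U) := by
  rintro x ⟨⟨hxS, hxc⟩, hxU⟩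
  refine ⟨⟨hxS, hxU⟩, ?_⟩
  rw [mem_closure_iff] at hxc ⊢
  intro o ho hxo
  obtain ⟨z, hz⟩ := hxc (o ∩ U) (ho.inter hU) ⟨hxo, hxU⟩
  exact ⟨z, hz.1.1, ⟨⟨hz.2.1, hz.1.2⟩, hz.2.2⟩⟩

lemma cbIter_inter_open {U : Set R} (hU : IsOpen U) (X : Set R) :
    ∀ k, cbIter X k ∩ U ⊆ cbIter (X ∩ U) k
  | 0 => subset_rfl
  | k + 1 => fun x hx =>
      cbDeriv_mono (cbIter_inter_open hU X k) (cbDeriv_inter_open hU hx)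

lemma cb_key {R : Type*} [TopologicalSpace R] [T1Space R] :
    ∀ (n : ℕ) (X : Set R) (f : Fin n → Set R),
      (∀ i, ∀ x ∈ f i, x ∉ closure (f i \ {x})) → X ⊆ ⋃ i, f i → cbIter X n = ∅ := by
  intro n
  induction n with
  | zero =>
      intro X f _ hsub
      rw [show cbIter X 0 = X from rfl]
      have : (⋃ i : Fin 0, f i) = (∅ : Set R) := by simp
      rw [this] at hsub
      exact eq_empty_iff_forall_notMem.2 fun x hx => hsub hx
  | succ n ih =>
      intro X f hdisc hsub
      by_contra hne
      obtain ⟨x, hx⟩ := nonempty_iff_ne_empty.2 hne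
      have hxX : x ∈ X := cbIter_anti X (Nat.zero_le (n + 1)) hx
      obtain ⟨i, hxi⟩ := mem_iUnion.mp (hsub hxX)
      have hiso := hdisc i x hxi
      rw [mem_closure_iff] at hiso
      push_neg at hiso
      obtain ⟨V, hVo, hxV, hVe⟩ := hiso
      -- U = V \ {x} is open
      have hUo : IsOpen (V \ {x}) := hVo.sdiff isClosed_singleton
      -- X ∩ U is covered by the remaining n pieces
      have hcov : X ∩ (V \ {x}) ⊆ ⋃ j : Fin n, f (i.succAbove j) := by
        rintro y ⟨hyX, hyV, hyx⟩
        obtain ⟨j, hyj⟩ := mem_iUnion.mp (hsub hyX)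
        have hji : j ≠ i := by
          rintro rfl
          exact Set.eq_empty_iff_forall_notMem.mp hVe y ⟨hyV, hyj, hyx⟩
        obtain ⟨k, hk⟩ := Fin.exists_succAbove_eq hji
        exact mem_iUnion.mpr ⟨k, by rw [hk]; exact hyj⟩
      have hIH : cbIter (X ∩ (V \ {x})) n = ∅ :=
        ih (X ∩ (V \ {x})) (fun j => f (i.succAbove j)) (fun j => hdisc _) hcov
      -- x is a limit of cbIter X n \ {x}, so V meets it
      have hx' : x ∈ closure (cbIter X n \ {x}) := hx.2
      rw [mem_closure_iff] at hx'
      obtain ⟨y, hyV, hyn, hyx⟩ := hx' V hVo hxV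
      have : y ∈ cbIter (X ∩ (V \ {x})) n :=
        cbIter_inter_open hUo X n ⟨hyn, hyV, hyx⟩
      rw [hIH] at this
      exact this

lemma cb_layers_cover {R : Type*} [TopologicalSpace R] {X : Set R} {n : ℕ}
    (h : cbIter X n = ∅) :
    (⋃ i ∈ Finset.range n, cbIter X i \ cbIter X (i + 1)) = X := by
  apply Set.Subset.antisymm
  · refine Set.iUnion₂_subset fun i _ => ?_
    exact (diff_subset).trans (cbIter_anti X (Nat.zero_le i))
  · intro x hx
    have hex : ∃ k, x ∉ cbIter X k := ⟨n, by simp [h]⟩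
    classical
    have hm0 : Nat.find hex ≠ 0 := fun h0 => (h0 ▸ Nat.find_spec hex) hx
    obtain ⟨m', hm'⟩ := Nat.exists_eq_succ_of_ne_zero hm0
    have hmem : x ∈ cbIter X m' := by
      by_contra hc
      exact Nat.find_min hex (by omega) hc
    have hnot : x ∉ cbIter X (m' + 1) := by
      have := Nat.find_spec hex
      rwa [hm'] at this
    have hle : Nat.find hex ≤ n := Nat.find_le (by simp [h])
    have hlt : m' < n := by omega
    exact Set.mem_biUnion (Finset.mem_range.2 hlt) ⟨hmem, hnot⟩

end Aux

theorem stmt6 {R : Type*} [LinearOrder R] [TopologicalSpace R] [OrderTopology R]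
    (X : Set R) (n : ℕ) :
    ((∃ f : Fin n → Set R, (∀ i, ∀ x ∈ f i, x ∉ closure (f i \ {x})) ∧ X = ⋃ i, f i)
      ↔ cbIter X n = ∅) ∧
    (cbIter X n = ∅ →
      (∀ i : ℕ, ∀ x ∈ cbIter X i \ cbIter X (i + 1),
        x ∉ closure ((cbIter X i \ cbIter X (i + 1)) \ {x})) ∧
      (⋃ i ∈ Finset.range n, cbIter X i \ cbIter X (i + 1)) = X ∧
      (∀ i j : ℕ, i ≠ j →
        Disjoint (cbIter X i \ cbIter X (i + 1)) (cbIter X j \ cbIter X (j + 1)))) := by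
  have hlayer : ∀ i : ℕ, ∀ x ∈ cbIter X i \ cbIter X (i + 1),
      x ∉ closure ((cbIter X i \ cbIter X (i + 1)) \ {x}) := by
    rintro i x ⟨hxi, hxi1⟩ hcl
    apply hxi1
    exact ⟨hxi, closure_mono (diff_subset_diff_left diff_subset) hcl⟩
  have hdisj : ∀ i j : ℕ, i ≠ j →
      Disjoint (cbIter X i \ cbIter X (i + 1)) (cbIter X j \ cbIter X (j + 1)) := by
    have key : ∀ i j : ℕ, i < j →
        Disjoint (cbIter X i \ cbIter X (i + 1)) (cbIter X j \ cbIter X (j + 1)) := by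
      intro i j hij
      rw [Set.disjoint_left]
      rintro x ⟨_, hxi1⟩ ⟨hxj, _⟩
      exact hxi1 (cbIter_anti X (by omega : i + 1 ≤ j) hxj)
    intro i j hij
    rcases lt_or_gt_of_ne hij with h | h
    · exact key i j h
    · exact (key j i h).symm
  refine ⟨⟨?_, ?_⟩, fun h => ⟨hlayer, cb_layers_cover h, hdisj⟩⟩
  · rintro ⟨f, hdisc, rfl⟩
    exact cb_key n _ f hdisc subset_rfl
  · intro h
    refine ⟨fun i => cbIter X i \ cbIter X (i + 1), fun i => hlayer i, ?_⟩
    have heq : (⋃ i : Fin n, (cbIter X i \ cbIter X ((i : ℕ) + 1)))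
        = ⋃ i ∈ Finset.range n, cbIter X i \ cbIter X (i + 1) := by
      ext x
      simp only [Set.mem_iUnion, Finset.mem_range]
      exact ⟨fun ⟨i, hx⟩ => ⟨i, i.isLt, hx⟩, fun ⟨i, hi, hx⟩ => ⟨⟨i, hi⟩, hx⟩⟩
    rw [heq, cb_layers_cover h]
end

section
/- Let (R, <, +, 0) be a densely linearly ordered abelian group with the order topology, and let X ⊆ R be the union of n discrete sets X₁, …, Xₙ. For each ε > 0 define X(ε) = ⋃ᵢ { x ∈ Xᵢ : (x − ε, x + ε) ∩ Xᵢ = {x} }. Then {X(ε) : ε > 0} is an upward directed covering of X, and every X(ε) is a closed discrete subset of R. (For closedness and discreteness: given a ∈ R, choose δ > 0 with 2δ < ε; then any two points x ≤ y of (a−δ, a+δ) satisfy y ∈ (x−ε, x+ε), so (a−δ, a+δ) ∩ X(ε) ∩ Xᵢ has at most one element, hence (a−δ, a+δ) ∩ X(ε) has at most n elements.) -/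
open Set Topology

/-- Points of `S` that are `ε`-isolated in `S`. -/
def isoPts {R : Type*} [AddCommGroup R] [LinearOrder R] [IsOrderedAddMonoid R] (S : Set R) (ε : R) : Set R :=
  {y ∈ S | Set.Ioo (y - ε) (y + ε) ∩ S = {y}}

section LocallyFinite

variable {X : Type*} [TopologicalSpace X] [T1Space X] {A : Set X}

theorem isClosed_of_subset_of_finite_inter_nhds (h : ∀ a, ∃ U ∈ 𝓝 a, (U ∩ A).Finite)
    {B : Set X} (hBA : B ⊆ A) : IsClosed B := by
  refine isOpen_compl_iff.mp <| isOpen_iff_mem_nhds.mpr fun a ha => ?_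
  obtain ⟨U, hU, hUA⟩ := h a
  have hUB : (U ∩ B)ᶜ ∈ 𝓝 a :=
    ((hUA.subset (inter_subset_inter_right U hBA)).isClosed.isOpen_compl).mem_nhds
      fun haUB => ha haUB.2
  exact Filter.mem_of_superset (Filter.inter_mem hU hUB) fun y ⟨hyU, hy⟩ hyB => hy ⟨hyU, hyB⟩

theorem isClosed_and_isolated_of_finite_inter_nhds (h : ∀ a, ∃ U ∈ 𝓝 a, (U ∩ A).Finite) :
    IsClosed A ∧ ∀ x ∈ A, x ∉ closure (A \ {x}) := by
  refine ⟨isClosed_of_subset_of_finite_inter_nhds h subset_rfl, fun x _ hx => ?_⟩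
  rw [(isClosed_of_subset_of_finite_inter_nhds h sdiff_subset).closure_eq] at hx
  exact hx.2 rfl

end LocallyFinite

section IsoPts

variable {R : Type*} [AddCommGroup R] [LinearOrder R] [IsOrderedAddMonoid R] {S : Set R}
  {ε ε' : R}

theorem isoPts_subset (ε : R) : isoPts S ε ⊆ S := fun _ hy => hy.1

theorem mem_Ioo_sub_add_self (x : R) (hε : 0 < ε) : x ∈ Ioo (x - ε) (x + ε) :=
  ⟨sub_lt_self x hε, lt_add_of_pos_right x hε⟩

theorem isoPts_anti (hε' : 0 < ε') (hle : ε' ≤ ε) : isoPts S ε ⊆ isoPts S ε' := by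
  rintro y ⟨hyS, hy⟩
  refine ⟨hyS, Subset.antisymm ?_ ?_⟩
  · rw [← hy]
    exact inter_subset_inter_left S (Ioo_subset_Ioo (sub_le_sub_left hle y) (add_le_add_right hle y))
  · rintro z rfl
    exact ⟨mem_Ioo_sub_add_self z hε', hyS⟩

theorem exists_mem_isoPts [TopologicalSpace R] [OrderTopology R] [NoMaxOrder R] {x : R}
    (hxS : x ∈ S) (hx : x ∉ closure (S \ {x})) : ∃ ε > 0, x ∈ isoPts S ε := by
  obtain ⟨ε, hε, hsub⟩ :=
    (nhds_basis_Ioo_pos x).mem_iff.mp (isClosed_closure.isOpen_compl.mem_nhds hx)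
  refine ⟨ε, hε, hxS, Subset.antisymm ?_ ?_⟩
  · rintro y ⟨hyI, hyS⟩
    by_contra hyx
    exact hsub hyI (subset_closure ⟨hyS, hyx⟩)
  · rintro y rfl
    exact ⟨mem_Ioo_sub_add_self y hε, hxS⟩

/-- Two distinct `ε`-isolated points of `S` are at distance at least `ε`. -/
theorem subsingleton_Ioo_inter_isoPts {δ : R} (hδ : δ + δ ≤ ε) (a : R) :
    (Ioo (a - δ) (a + δ) ∩ isoPts S ε).Subsingleton := by
  rintro x ⟨⟨hax, hxa⟩, -, hx⟩ y ⟨⟨hay, hya⟩, hyS, -⟩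
  have hyx : y ∈ Ioo (x - ε) (x + ε) := by
    constructor
    · calc x - ε ≤ x - (δ + δ) := sub_le_sub_left hδ x
        _ < a + δ - (δ + δ) := sub_lt_sub_right hxa _
        _ = a - δ := by abel
        _ < y := hay
    · calc y < a + δ := hya
        _ = a - δ + (δ + δ) := by abel
        _ < x + (δ + δ) := add_lt_add_left hax _
        _ ≤ x + ε := add_le_add_right hδ x
  exact ((hx.subset ⟨hyx, hyS⟩ : y = x)).symm

theorem exists_pos_add_self_le [DenselyOrdered R] (hε : 0 < ε) : ∃ δ > 0, δ + δ ≤ ε := by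
  obtain ⟨c, hc0, hcε⟩ := exists_between hε
  refine ⟨min c (ε - c), lt_min hc0 (sub_pos.mpr hcε), ?_⟩
  calc min c (ε - c) + min c (ε - c) ≤ c + (ε - c) := add_le_add (min_le_left _ _) (min_le_right _ _)
    _ = ε := add_sub_cancel c ε

theorem finite_Ioo_inter_iUnion_isoPts {ι : Type*} [Finite ι] (Xs : ι → Set R) {δ : R}
    (hδ : δ + δ ≤ ε) (a : R) : (Ioo (a - δ) (a + δ) ∩ ⋃ i, isoPts (Xs i) ε).Finite := by
  rw [inter_iUnion]
  exact finite_iUnion fun i => (subsingleton_Ioo_inter_isoPts hδ a).finite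

end IsoPts

theorem stmt7 {R : Type*} [AddCommGroup R] [LinearOrder R] [IsOrderedAddMonoid R] [DenselyOrdered R] [Nontrivial R]
    [TopologicalSpace R] [OrderTopology R]
    (n : ℕ) (X : Set R) (Xs : Fin n → Set R)
    (hdisc : ∀ i, ∀ x ∈ Xs i, x ∉ closure (Xs i \ {x}))
    (hX : X = ⋃ i, Xs i) :
    (∀ x ∈ X, ∃ ε > (0 : R), x ∈ ⋃ i, isoPts (Xs i) ε) ∧
    (∀ ε > (0 : R), (⋃ i, isoPts (Xs i) ε) ⊆ X) ∧
    (∀ ε ε' : R, 0 < ε' → ε' ≤ ε → (⋃ i, isoPts (Xs i) ε) ⊆ ⋃ i, isoPts (Xs i) ε') ∧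
    (∀ ε > (0 : R), IsClosed (⋃ i, isoPts (Xs i) ε) ∧
      ∀ x ∈ ⋃ i, isoPts (Xs i) ε, x ∉ closure ((⋃ i, isoPts (Xs i) ε) \ {x})) := by
  subst hX
  refine ⟨fun x hx => ?_, fun ε _ => iUnion_mono fun i => isoPts_subset ε,
    fun ε ε' hε' hle => iUnion_mono fun i => isoPts_anti hε' hle, fun ε hε => ?_⟩
  · obtain ⟨i, hxi⟩ := mem_iUnion.mp hx
    obtain ⟨ε, hε, hxε⟩ := exists_mem_isoPts hxi (hdisc i x hxi)
    exact ⟨ε, hε, mem_iUnion.mpr ⟨i, hxε⟩⟩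
  · obtain ⟨δ, hδ, hδε⟩ := exists_pos_add_self_le hε
    exact isClosed_and_isolated_of_finite_inter_nhds fun a =>
      ⟨_, Ioo_mem_nhds (sub_lt_self a hδ) (lt_add_of_pos_right a hδ),
        finite_Ioo_inter_iUnion_isoPts Xs hδε a⟩
end

section
/- Let (R, <, +, 0) be a densely ordered abelian group with the order topology, and let X ⊆ R be a well-ordered subset (i.e. (X, <) is a well order), so that every element of X has a successor in X or is the maximum. For ε > 0 define X(ε) = { a ∈ X : (a, a + ε) ∩ X = ∅ }. Then the family {X(ε) : ε > 0} is an increasing (as ε decreases) covering of X by closed discrete subsets of R. -/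
/-!
Above each `a ∈ X` the well-founded set `X ∩ (a, ∞)` has a least element (or is empty), which
gives the gap `(a, a + ε)` missing `X`. Two points `a < b` of `X(ε)` satisfy `a + ε ≤ b`, so every
half-open interval of length `ε` holds at most one of them and `(x - ε, x + ε)` at most two:
`X(ε)` is locally finite, hence closed and discrete.
-/

open Set Topology

/-- The set `X(ε)`. -/
def gapSet {α : Type*} [Add α] [Preorder α] (X : Set α) (ε : α) : Set α :=
  {a ∈ X | Ioo a (a + ε) ∩ X = ∅}

theorem mem_of_mem_closure_of_finite_inter {T : Type*} [TopologicalSpace T] [T1Space T]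
    {Y U : Set T} {x : T} (hU : IsOpen U) (hxU : x ∈ U) (hfin : (U ∩ Y).Finite)
    (hx : x ∈ closure Y) : x ∈ Y := by
  have hxcl := hU.inter_closure ⟨hxU, hx⟩
  rw [hfin.isClosed.closure_eq] at hxcl
  exact hxcl.2

theorem Set.IsWF.exists_Ioo_inter_eq_empty {α : Type*} [LinearOrder α] [NoMaxOrder α]
    {X : Set α} (hX : X.IsWF) (a : α) : ∃ b, a < b ∧ Ioo a b ∩ X = ∅ := by
  rcases (X ∩ Ioi a).eq_empty_or_nonempty with hempty | hne
  · obtain ⟨b, hab⟩ := exists_gt a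
    refine ⟨b, hab, eq_empty_of_forall_notMem fun y hy => ?_⟩
    exact (hempty ▸ ⟨hy.2, hy.1.1⟩ : y ∈ (∅ : Set α))
  · have hwf : (X ∩ Ioi a).IsWF := hX.mono inter_subset_left
    refine ⟨hwf.min hne, (hwf.min_mem hne).2, eq_empty_of_forall_notMem fun y hy => ?_⟩
    exact hwf.not_lt_min hne ⟨hy.2, hy.1.1⟩ hy.1.2

theorem add_le_of_mem_gapSet {α : Type*} [Add α] [LinearOrder α] {X : Set α} {ε a b : α}
    (ha : a ∈ gapSet X ε) (hb : b ∈ X) (hab : a < b) : a + ε ≤ b := by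
  by_contra! hlt
  exact (ha.2 ▸ ⟨⟨hab, hlt⟩, hb⟩ : b ∈ (∅ : Set α))

section OrderedGroup

variable {α : Type*} [AddCommGroup α] [LinearOrder α] [IsOrderedAddMonoid α]

theorem Set.IsWF.exists_pos_mem_gapSet [Nontrivial α] {X : Set α} (hX : X.IsWF) {a : α}
    (ha : a ∈ X) : ∃ ε > 0, a ∈ gapSet X ε := by
  obtain ⟨b, hab, hgap⟩ := hX.exists_Ioo_inter_eq_empty a
  exact ⟨b - a, sub_pos.mpr hab, ha, by rwa [add_sub_cancel]⟩

theorem gapSet_anti {X : Set α} {ε ε' : α} (h : ε' ≤ ε) : gapSet X ε ⊆ gapSet X ε' :=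
  fun _ ⟨ha, hgap⟩ =>
    ⟨ha, subset_empty_iff.mp <| hgap ▸ inter_subset_inter_left X (Ioo_subset_Ioo_right
      (add_le_add_right h _))⟩

theorem subsingleton_inter_Ico_of_separated {Y : Set α} {ε : α}
    (hY : ∀ a ∈ Y, ∀ b ∈ Y, a < b → a + ε ≤ b) (c : α) : (Y ∩ Ico c (c + ε)).Subsingleton := by
  have key : ∀ y ∈ Y ∩ Ico c (c + ε), ∀ z ∈ Y ∩ Ico c (c + ε), ¬ y < z := fun y hy z hz hyz =>
    (hz.2.2.trans_le (add_le_add_left hy.2.1 ε)).not_ge (hY y hy.1 z hz.1 hyz)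
  intro y hy z hz
  by_contra hne
  rcases lt_or_gt_of_ne hne with hyz | hzy
  exacts [key y hy z hz hyz, key z hz y hy hzy]

theorem finite_inter_Ioo_of_separated {Y : Set α} {ε : α}
    (hY : ∀ a ∈ Y, ∀ b ∈ Y, a < b → a + ε ≤ b) (x : α) :
    (Ioo (x - ε) (x + ε) ∩ Y).Finite := by
  have hcover : Ioo (x - ε) (x + ε) ∩ Y ⊆
      (Y ∩ Ico (x - ε) (x - ε + ε)) ∪ (Y ∩ Ico x (x + ε)) := by
    rintro y ⟨⟨hlo, hhi⟩, hy⟩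
    rw [sub_add_cancel]
    rcases lt_or_ge y x with hyx | hxy
    exacts [Or.inl ⟨hy, hlo.le, hyx⟩, Or.inr ⟨hy, hxy, hhi⟩]
  exact ((subsingleton_inter_Ico_of_separated hY _).finite.union
    (subsingleton_inter_Ico_of_separated hY _).finite).subset hcover

variable [TopologicalSpace α] [OrderTopology α]

theorem isClosed_gapSet (X : Set α) {ε : α} (hε : 0 < ε) : IsClosed (gapSet X ε) := by
  refine isClosed_of_closure_subset fun x hx => mem_of_mem_closure_of_finite_inter isOpen_Ioo
    ⟨sub_lt_self x hε, lt_add_of_pos_right x hε⟩ ?_ hx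
  exact finite_inter_Ioo_of_separated (fun _ ha _ hb => add_le_of_mem_gapSet ha hb.1) x

theorem notMem_closure_gapSet_diff_singleton (X : Set α) {ε x : α} (hε : 0 < ε) :
    x ∉ closure (gapSet X ε \ {x}) := fun hx =>
  (mem_of_mem_closure_of_finite_inter isOpen_Ioo ⟨sub_lt_self x hε, lt_add_of_pos_right x hε⟩
    ((finite_inter_Ioo_of_separated (fun _ ha _ hb => add_le_of_mem_gapSet ha hb.1) x).subset
      (inter_subset_inter_right _ sdiff_subset)) hx).2 rfl

end OrderedGroup

theorem stmt8_general {R : Type*} [AddCommGroup R] [LinearOrder R] [IsOrderedAddMonoid R] [Nontrivial R]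
    [TopologicalSpace R] [OrderTopology R]
    (X : Set R) (hwf : X.IsWF) :
    (∀ a ∈ X, ∃ ε > (0 : R), a ∈ {a ∈ X | Ioo a (a + ε) ∩ X = ∅}) ∧
    (∀ ε ε' : R, 0 < ε' → ε' ≤ ε →
      {a ∈ X | Ioo a (a + ε) ∩ X = ∅} ⊆ {a ∈ X | Ioo a (a + ε') ∩ X = ∅}) ∧
    (∀ ε > (0 : R), IsClosed {a ∈ X | Ioo a (a + ε) ∩ X = ∅} ∧
      ∀ x ∈ {a ∈ X | Ioo a (a + ε) ∩ X = ∅},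
        x ∉ closure ({a ∈ X | Ioo a (a + ε) ∩ X = ∅} \ {x})) := by
  refine ⟨fun a ha => ?_, fun ε ε' _ h => ?_, fun ε hε => ⟨?_, fun x _ => ?_⟩⟩
  exacts [hwf.exists_pos_mem_gapSet ha, gapSet_anti h, isClosed_gapSet X hε,
    notMem_closure_gapSet_diff_singleton X hε]

theorem stmt8 {R : Type*} [AddCommGroup R] [LinearOrder R] [IsOrderedAddMonoid R] [DenselyOrdered R] [Nontrivial R]
    [TopologicalSpace R] [OrderTopology R]
    (X : Set R) (hwf : X.IsWF) :
    (∀ a ∈ X, ∃ ε > (0 : R), a ∈ {a ∈ X | Ioo a (a + ε) ∩ X = ∅}) ∧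
    (∀ ε ε' : R, 0 < ε' → ε' ≤ ε →
      {a ∈ X | Ioo a (a + ε) ∩ X = ∅} ⊆ {a ∈ X | Ioo a (a + ε') ∩ X = ∅}) ∧
    (∀ ε > (0 : R), IsClosed {a ∈ X | Ioo a (a + ε) ∩ X = ∅} ∧
      ∀ x ∈ {a ∈ X | Ioo a (a + ε) ∩ X = ∅},
        x ∉ closure ({a ∈ X | Ioo a (a + ε) ∩ X = ∅} \ {x})) :=
  stmt8_general X hwf
end

section
/- In the ordered group (ℝ, <, +), the open right half-line I = (0, ∞) is not the image under a coordinate projection of any closed set C ⊆ ℝⁿ definable in (ℝ, <, +); concretely: there is no closed subset C ⊆ ℝⁿ that is a finite union of (relatively open or closed pieces of) polyhedra defined by finitely many linear inequalities with rational coefficients and real constants, such that the projection of C to the first coordinate equals (0, ∞). Equivalently: if C ⊆ ℝⁿ is a closed semilinear set (definable with + and < only) and π(C) = (0,∞) for the first-coordinate projection π, a contradiction follows, because by semilinear cell decomposition there is a semilinear (piecewise affine) curve γ : (0, t₀) → C with π(γ(t)) = t, and as t → 0⁺ some coordinate of γ must tend to ±∞ while being piecewise affine in t, forcing γ to eventually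 be affine with finite limit, contradiction. -/
open Set Topology

/-- A basic semilinear set: defined by finitely many conditions `λ(x) < c` or `λ(x) = c`
with `λ` a `ℚ`-linear functional and `c ∈ ℝ`. -/
def BasicSemilinear (n : ℕ) (S : Set (Fin n → ℝ)) : Prop :=
  ∃ (k : ℕ) (L : Fin k → Fin n → ℚ) (c : Fin k → ℝ) (strict : Fin k → Bool),
    S = {x | ∀ i : Fin k,
      if strict i then (∑ j, (L i j : ℝ) * x j) < c i
      else (∑ j, (L i j : ℝ) * x j) = c i}

/-- A semilinear set: a finite union of basic semilinear sets; these are exactly the sets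
definable with parameters in `(ℝ, <, +)`. -/
def IsSemilinear (n : ℕ) (S : Set (Fin n → ℝ)) : Prop :=
  ∃ (m : ℕ) (B : Fin m → Set (Fin n → ℝ)), (∀ i, BasicSemilinear n (B i)) ∧ S = ⋃ i, B i

def PolySet16 (d : ℕ) (S : Set (Fin d → ℝ)) : Prop :=
  ∃ (ι : Type) (_ : Fintype ι) (a : ι → Fin d → ℝ) (c : ι → ℝ),
    S = {x | ∀ i, (∑ j, a i j * x j) ≤ c i}

theorem polySet_closed {d : ℕ} {S : Set (Fin d → ℝ)} (h : PolySet16 d S) : IsClosed S := by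
  obtain ⟨ι, _, a, c, rfl⟩ := h
  have : {x : Fin d → ℝ | ∀ i, (∑ j, a i j * x j) ≤ c i}
      = ⋂ i, {x | (∑ j, a i j * x j) ≤ c i} := by ext x; simp
  rw [this]
  refine isClosed_iInter fun i => isClosed_le ?_ continuous_const
  exact continuous_finset_sum _ fun j _ => (continuous_const.mul (continuous_apply j))

theorem polySet_proj {d : ℕ} {S : Set (Fin (d+1) → ℝ)} (h : PolySet16 (d+1) S) :
    PolySet16 d ((fun x : Fin (d+1) → ℝ => x ∘ Fin.castSucc) '' S) := by
  classical
  obtain ⟨ι, _, A, c, rfl⟩ := h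
  set a : ι → Fin d → ℝ := fun i j => A i (Fin.castSucc j) with ha
  set b : ι → ℝ := fun i => A i (Fin.last d) with hb
  have hsum : ∀ (i : ι) (x : Fin (d+1) → ℝ),
      (∑ j, A i j * x j) = (∑ j, a i j * x (Fin.castSucc j)) + b i * x (Fin.last d) := by
    intro i x
    rw [Fin.sum_univ_castSucc]
  set ι' := {i // b i = 0} ⊕ ({i // 0 < b i} × {i // b i < 0}) with hι'
  refine ⟨ι', inferInstance, Sum.elim (fun i => a i.1)
      (fun p => fun t => b p.1.1 * a p.2.1 t - b p.2.1 * a p.1.1 t),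
    Sum.elim (fun i => c i.1) (fun p => b p.1.1 * c p.2.1 - b p.2.1 * c p.1.1), ?_⟩
  ext y
  simp only [mem_image, mem_setOf_eq]
  constructor
  · rintro ⟨x, hx, rfl⟩
    rintro (⟨i, hi0⟩ | ⟨⟨i, hip⟩, ⟨j, hjn⟩⟩)
    · have := hx i
      rw [hsum] at this
      simpa [hi0] using this
    · have hxi := hx i
      have hxj := hx j
      rw [hsum] at hxi hxj
      simp only [Sum.elim_inr, Finset.sum_sub_distrib, ← Finset.mul_sum]
      set z := x (Fin.last d)
      set p := ∑ t, a i t * x (Fin.castSucc t)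
      set q := ∑ t, a j t * x (Fin.castSucc t)
      have h1 : b i * (q + b j * z) ≤ b i * c j := mul_le_mul_of_nonneg_left hxj hip.le
      have h2 : b j * c i ≤ b j * (p + b i * z) := mul_le_mul_of_nonpos_left hxi hjn.le
      have e1 : (∑ t, (b i * a j t - b j * a i t) * (x ∘ Fin.castSucc) t)
          = b i * q - b j * p := by
        simp only [sub_mul, Finset.sum_sub_distrib, Finset.mul_sum, mul_assoc,
          Function.comp_apply, p, q]
      rw [e1]
      nlinarith [h1, h2]
  · intro hy
    set p : ι → ℝ := fun i => ∑ t, a i t * y t with hp'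
    set u : ι → ℝ := fun i => (c i - p i) / b i with hu'
    set U : Finset ι := Finset.univ.filter (fun i => 0 < b i) with hUdef
    set Lo : Finset ι := Finset.univ.filter (fun i => b i < 0) with hLodef
    have hzero : ∀ i, b i = 0 → p i ≤ c i := fun i h0 => by
      simpa using hy (Sum.inl ⟨i, h0⟩)
    have hpair : ∀ i j, 0 < b i → b j < 0 → u j ≤ u i := by
      intro i j hip hjn
      have hp := hy (Sum.inr (⟨i, hip⟩, ⟨j, hjn⟩))
      simp only [Sum.elim_inr] at hp
      have e1 : (∑ t, (b i * a j t - b j * a i t) * y t)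
          = b i * p j - b j * p i := by
        simp only [sub_mul, Finset.sum_sub_distrib, Finset.mul_sum, mul_assoc, hp']
      rw [e1] at hp
      show (c j - p j) / b j ≤ (c i - p i) / b i
      rw [div_le_iff_of_neg hjn, div_mul_eq_mul_div, div_le_iff₀ hip]
      nlinarith [hp]
    set z : ℝ := if hUn : U.Nonempty then U.inf' hUn u
      else if hLn : Lo.Nonempty then Lo.sup' hLn u else 0 with hz
    have hbu : ∀ i, b i ≠ 0 → b i * u i = c i - p i := by
      intro i hne
      rw [hu']
      field_simp
    have hup : ∀ i, 0 < b i → z ≤ u i := by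
      intro i hip
      have hiU : i ∈ U := Finset.mem_filter.2 ⟨Finset.mem_univ _, hip⟩
      have hUn : U.Nonempty := ⟨i, hiU⟩
      rw [hz, dif_pos hUn]
      exact Finset.inf'_le u hiU
    have hlo : ∀ i, b i < 0 → u i ≤ z := by
      intro i hin
      have hiL : i ∈ Lo := Finset.mem_filter.2 ⟨Finset.mem_univ _, hin⟩
      by_cases hUn : U.Nonempty
      · rw [hz, dif_pos hUn]
        obtain ⟨i0, hi0, heq⟩ := U.exists_mem_eq_inf' hUn u
        rw [heq]
        exact hpair i0 i (Finset.mem_filter.1 hi0).2 hin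
      · rw [hz, dif_neg hUn, dif_pos ⟨i, hiL⟩]
        exact Finset.le_sup' u hiL
    refine ⟨Fin.snoc y z, ?_, ?_⟩
    · intro i
      rw [hsum]
      simp only [Fin.snoc_castSucc, Fin.snoc_last]
      show p i + b i * z ≤ c i
      rcases lt_trichotomy (b i) 0 with hbi | hbi | hbi
      · have h1 : b i * z ≤ b i * u i := mul_le_mul_of_nonpos_left (hlo i hbi) hbi.le
        rw [hbu i hbi.ne] at h1
        linarith
      · rw [hbi]
        simpa using hzero i hbi
      · have h1 : b i * z ≤ b i * u i := mul_le_mul_of_nonneg_left (hup i hbi) hbi.le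
        rw [hbu i hbi.ne'] at h1
        linarith
    · funext t
      simp [Fin.snoc_castSucc]

theorem polySet_proj0_closed : ∀ (d : ℕ) (S : Set (Fin (d+1) → ℝ)), PolySet16 (d+1) S →
    IsClosed ((fun x : Fin (d+1) → ℝ => x 0) '' S) := by
  intro d
  induction d with
  | zero =>
    intro S hS
    have himg : (fun x : Fin 1 → ℝ => x 0) '' S = (fun t : ℝ => fun _ : Fin 1 => t) ⁻¹' S := by
      ext t
      simp only [mem_image, mem_preimage]
      constructor
      · rintro ⟨x, hx, rfl⟩
        have hx' : (fun _ : Fin 1 => x 0) = x := by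
          funext i; rw [Subsingleton.elim i 0]
        rw [hx']; exact hx
      · intro h; exact ⟨_, h, rfl⟩
    rw [himg]
    exact (polySet_closed hS).preimage (continuous_pi fun _ => continuous_id)
  | succ d ih =>
    intro S hS
    have himg : (fun x : Fin (d+2) → ℝ => x 0) '' S
        = (fun y : Fin (d+1) → ℝ => y 0) ''
          ((fun x : Fin (d+2) → ℝ => x ∘ Fin.castSucc) '' S) := by
      rw [Set.image_image]
      simp [Function.comp]
    rw [himg]
    exact ih _ (polySet_proj hS)

theorem basic_closure {N : ℕ} {B : Set (Fin N → ℝ)} (hB : BasicSemilinear N B) :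
    closure B = ∅ ∨ PolySet16 N (closure B) := by
  obtain ⟨k, L, c, strict, rfl⟩ := hB
  set B : Set (Fin N → ℝ) := {x | ∀ i : Fin k,
      if strict i then (∑ j, (L i j : ℝ) * x j) < c i
      else (∑ j, (L i j : ℝ) * x j) = c i} with hBdef
  by_cases hne : B.Nonempty
  · right
    obtain ⟨b, hb⟩ := hne
    set ι : Type := Fin k ⊕ {i : Fin k // strict i = false} with hι
    set a : ι → Fin N → ℝ := Sum.elim (fun i j => (L i j : ℝ))
        (fun i j => -(L i.1 j : ℝ)) with ha
    set c' : ι → ℝ := Sum.elim c (fun i => -(c i.1)) with hc'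
    set P : Set (Fin N → ℝ) := {x | ∀ i : ι, (∑ j, a i j * x j) ≤ c' i} with hP
    have hBP : B ⊆ P := by
      intro x hx
      rintro (i | ⟨i, hi⟩)
      · have := hx i
        by_cases hs : strict i
        · rw [if_pos hs] at this
          exact this.le
        · rw [if_neg hs] at this
          exact this.le
      · have := hx i
        rw [if_neg (by simp [hi])] at this
        simp only [ha, hc', Sum.elim_inr, neg_mul, Finset.sum_neg_distrib]
        linarith [this.ge]
    have hPpoly : PolySet16 N P := ⟨ι, inferInstance, a, c', rfl⟩
    have hPcl : IsClosed P := polySet_closed hPpoly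
    have h1 : closure B ⊆ P := closure_minimal hBP hPcl
    have h2 : P ⊆ closure B := by
      intro x hx
      have hθ : ∀ m : ℕ, (0:ℝ) < 1 / (m + 1) := by
        intro m; positivity
      have hθ1 : ∀ m : ℕ, (1:ℝ) / (m + 1) ≤ 1 := by
        intro m
        rw [div_le_one (by positivity)]
        linarith [Nat.cast_nonneg (α := ℝ) m]
      set f : ℕ → (Fin N → ℝ) := fun m j => (1/(m+1:ℝ)) * b j + (1 - 1/(m+1:ℝ)) * x j with hf
      have hmem : ∀ m, f m ∈ B := by
        intro m
        intro i
        have hsum : (∑ j, (L i j : ℝ) * f m j)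
            = (1/(m+1:ℝ)) * (∑ j, (L i j : ℝ) * b j)
              + (1 - 1/(m+1:ℝ)) * (∑ j, (L i j : ℝ) * x j) := by
          rw [Finset.mul_sum, Finset.mul_sum, ← Finset.sum_add_distrib]
          apply Finset.sum_congr rfl
          intro j _
          simp only [hf]
          ring
        have hbi := hb i
        by_cases hs : strict i
        · rw [if_pos hs] at hbi ⊢
          have hxi : (∑ j, (L i j : ℝ) * x j) ≤ c i := hx (Sum.inl i)
          rw [hsum]
          nlinarith [hθ m, hθ1 m]
        · rw [if_neg hs] at hbi ⊢
          have hx1 : (∑ j, (L i j : ℝ) * x j) ≤ c i := hx (Sum.inl i)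
          have hx2 : (∑ j, -(L i j : ℝ) * x j) ≤ -(c i) := hx (Sum.inr ⟨i, by simpa using hs⟩)
          have hx3 : (∑ j, (L i j : ℝ) * x j) = c i := by
            simp only [neg_mul, Finset.sum_neg_distrib] at hx2
            linarith
          rw [hsum, hbi, hx3]
          ring
      have htend : Filter.Tendsto f Filter.atTop (nhds x) := by
        rw [tendsto_pi_nhds]
        intro j
        have h0 : Filter.Tendsto (fun m : ℕ => 1/(m+1:ℝ)) Filter.atTop (nhds 0) :=
          tendsto_one_div_add_atTop_nhds_zero_nat
        have ht : Filter.Tendsto (fun m : ℕ => 1/(m+1:ℝ) * b j + (1 - 1/(m+1:ℝ)) * x j)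
            Filter.atTop (nhds (0 * b j + (1 - 0) * x j)) :=
          (h0.mul tendsto_const_nhds).add ((tendsto_const_nhds.sub h0).mul tendsto_const_nhds)
        simpa [hf, one_div] using ht
      exact mem_closure_of_tendsto htend (Filter.Eventually.of_forall hmem)
    exact ⟨ι, inferInstance, a, c', Subset.antisymm h1 h2⟩
  · left
    rw [not_nonempty_iff_eq_empty] at hne
    rw [hne, closure_empty]

theorem stmt16 (n : ℕ) (C : Set (Fin (n + 1) → ℝ)) (hcl : IsClosed C)
    (hsl : IsSemilinear (n + 1) C) :
    (fun x : Fin (n + 1) → ℝ => x 0) '' C ≠ Set.Ioi (0 : ℝ) := by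
  intro h
  obtain ⟨m, B, hB, rfl⟩ := hsl
  have hCcl : (⋃ i, B i) = ⋃ i, closure (B i) :=
    Subset.antisymm (iUnion_mono fun i => subset_closure)
      (iUnion_subset fun i => closure_minimal (subset_iUnion B i) hcl)
  have hclosed : IsClosed ((fun x : Fin (n+1) → ℝ => x 0) '' ⋃ i, B i) := by
    rw [hCcl, image_iUnion]
    refine isClosed_iUnion_of_finite fun i => ?_
    rcases basic_closure (hB i) with hemp | hpoly
    · rw [hemp]; simp
    · exact polySet_proj0_closed n _ hpoly
  rw [h] at hclosed
  have h0 : (0:ℝ) ∈ Ioi (0:ℝ) := by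
    have := hclosed.closure_subset
    rw [closure_Ioi] at this
    exact this (self_mem_Ici)
  exact lt_irrefl 0 (mem_Ioi.mp h0)
end
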